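/- If rotor configurations ρ and ρ' on G are equivalent (ρ ≡ ρ'), then for every particle configuration τ the configurations τρ and τρ' are equivalent: τρ ≡ τρ'. -/

import Mathlib

open Function

/-- A strongly connected finite directed multigraph (self-loops and multiple arcs
allowed), given by source and head maps `src, head : E → V`, together with a nonempty
target set `T` and a rotor mechanism at each vertex: `next` is a cyclic ordering of
the arcs emanating from each vertex (it permutes the arcs, preserves the source, and
acts transitively on the arcs emanating from any fixed vertex). -/
structure RotorSystem (V E : Type) [Fintype V] [DecidableEq V] [Fintype E]
    [DecidableEq E] where
  src : E → V
  head : E → V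
  T : Finset V
  T_nonempty : T.Nonempty
  strongly_connected : ∀ v w : V,
    Relation.ReflTransGen (fun a b => ∃ e : E, src e = a ∧ head e = b) v w
  next : E → E
  next_src : ∀ e, src (next e) = src e
  next_bijective : Function.Bijective next
  next_cyclic : ∀ e e', src e = src e' → ∃ k : ℕ, next^[k] e = e'

namespace RotorSystem

variable {V E : Type} [Fintype V] [DecidableEq V] [Fintype E] [DecidableEq E]

/-- The set `V₀ = V - T` of non-target vertices. -/
abbrev V0 (S : RotorSystem V E) : Type := {v : V // v ∉ S.T}

/-- A rotor configuration: each non-target vertex carries an arc emanating from it. -/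
abbrev RConf (S : RotorSystem V E) : Type :=
  {ρ : S.V0 → E // ∀ v : S.V0, S.src (ρ v) = v.1}

/-- A particle configuration: a number of particles at each non-target vertex. -/
abbrev PConf (S : RotorSystem V E) : Type := S.V0 → ℕ

variable (S : RotorSystem V E)

/-- One step of a single particle's rotor walk: at a non-target vertex the rotor is
first progressed and the particle then moves along the new rotor arc; target vertices
absorb the particle. -/
def step (p : V × S.RConf) : V × S.RConf :=
  if h : p.1 ∈ S.T then p
  else
    (S.head (S.next (p.2.1 ⟨p.1, h⟩)),
      ⟨Function.update p.2.1 ⟨p.1, h⟩ (S.next (p.2.1 ⟨p.1, h⟩)), by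
        intro w
        rcases eq_or_ne w ⟨p.1, h⟩ with rfl | hw
        · rw [Function.update_self, S.next_src]
          exact p.2.2 ⟨p.1, h⟩
        · rw [Function.update_of_ne hw]
          exact p.2.2 w⟩)

open Classical in
/-- Route a single particle from `x` by rotor walk until it first reaches the target
set; the result is the pair (final position, final rotor configuration). -/
noncomputable def route (x : V) (ρ : S.RConf) : V × S.RConf :=
  if h : ∃ n, (S.step^[n] (x, ρ)).1 ∈ S.T then S.step^[Nat.find h] (x, ρ) else (x, ρ)

/-- `t_x(ρ)`: the target vertex reached by a single particle started at `x` with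
initial rotor configuration `ρ`. -/
noncomputable def tgt (x : V) (ρ : S.RConf) : V := (S.route x ρ).1

/-- The particle addition operator `E_v`: add one particle at `v` and route it to the
target set. -/
noncomputable def addAt (v : S.V0) (ρ : S.RConf) : S.RConf := (S.route v.1 ρ).2

/-- The action `σρ` of a particle configuration on a rotor configuration: place
`σ v` particles at each vertex `v` and route them all to the target set. -/
noncomputable def act (σ : S.PConf) (ρ : S.RConf) : S.RConf :=
  (Finset.univ : Finset S.V0).toList.foldr (fun v r => (S.addAt v)^[σ v] r) ρ

/-- Equivalence of rotor configurations: `ρ ≡ ρ'` iff `σρ = σρ'` for some particle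
configuration `σ`. -/
def REquiv (ρ ρ' : S.RConf) : Prop := ∃ σ : S.PConf, S.act σ ρ = S.act σ ρ'

/-- The outdegree `d(v)`. -/
def outdeg (v : V) : ℕ := (Finset.univ.filter fun e : E => S.src e = v).card

/-- The number `d(v,w)` of arcs from `v` to `w`. -/
def numArcs (v w : V) : ℕ :=
  (Finset.univ.filter fun e : E => S.src e = v ∧ S.head e = w).card

/-- A particle configuration is stable if every non-target vertex holds at most
`d(v) - 1` particles. -/
def IsStable (σ : S.PConf) : Prop := ∀ v : S.V0, σ v < S.outdeg v.1

/-- Parallel toppling: every unstable vertex topples once, sending one particle along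
each arc emanating from it. -/
def toppleStep (σ : S.PConf) : S.PConf := fun v =>
  (if S.outdeg v.1 ≤ σ v then σ v - S.outdeg v.1 else σ v) +
    ∑ w : S.V0, (if S.outdeg w.1 ≤ σ w then S.numArcs w.1 v.1 else 0)

open Classical in
/-- The stabilization `σ°` of a particle configuration. -/
noncomputable def stabilize (σ : S.PConf) : S.PConf :=
  if h : ∃ n, S.IsStable (S.toppleStep^[n] σ) then S.toppleStep^[Nat.find h] σ else σ

/-- A stable particle configuration is recurrent if it is reachable (by adding
particles and stabilizing) from every particle configuration.  The recurrent
configurations form the sandpile group `S(G/T)` under addition-then-stabilization. -/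
def IsRecurrent (τ : S.PConf) : Prop :=
  S.IsStable τ ∧ ∀ σ : S.PConf, ∃ τ' : S.PConf, τ = S.stabilize (τ' + σ)

/-- `e` is the identity element of the sandpile group `S(G/T)`. -/
def IsSandpileIdentity (e : S.PConf) : Prop :=
  S.IsRecurrent e ∧ ∀ τ : S.PConf, S.IsRecurrent τ → S.stabilize (e + τ) = τ

/-- The rotor arcs of `ρ`, as a relation on vertices. -/
def rotorRel (ρ : S.RConf) (a b : V) : Prop :=
  ∃ h : a ∉ S.T, S.head (ρ.1 ⟨a, h⟩) = b

/-- A rotor configuration is acyclic if its rotor arcs contain no directed cycle. -/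
def IsAcyclicConf (ρ : S.RConf) : Prop :=
  ∀ v : V, ¬ Relation.TransGen (S.rotorRel ρ) v v

/-- `ρ'` is obtained from `ρ` by pushing a cycle: there are distinct non-target
vertices `v_0, …, v_{r-1}` with the rotor arc of `v_j` pointing to `v_{j+1}`
(cyclically); each such rotor is regressed one step, other rotors are unchanged. -/
def IsCyclePush (ρ ρ' : S.RConf) : Prop :=
  ∃ r : ℕ, 0 < r ∧ ∃ f : ZMod r → S.V0, Function.Injective f ∧
    (∀ j : ZMod r, S.head (ρ.1 (f j)) = (f (j + 1)).1) ∧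
    (∀ j : ZMod r, S.next (ρ'.1 (f j)) = ρ.1 (f j)) ∧
    (∀ v : S.V0, v ∉ Set.range f → ρ'.1 v = ρ.1 v)

end RotorSystem

/-! The particle addition operators commute (the abelian property): letting two particles walk
one after the other is one particular order of moves in the system where several particles walk
simultaneously, and single moves at distinct vertices commute, so by the Church–Rosser property
every order of moves ends in the same state. Hence `σ(τρ) = τ(σρ)`, and `σρ = σρ'` gives
`σ(τρ) = τ(σρ) = τ(σρ') = σ(τρ')`. -/

lemma Function.Commute.foldr_right {α β : Type*} {g : α → α} {f : β → α → α}
    (l : List β) (h : ∀ b ∈ l, Function.Commute g (f b)) :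
    Function.Commute g (fun a => l.foldr f a) := by
  induction l with
  | nil => exact fun _ => rfl
  | cons b l ih =>
    intro a
    simp only [List.foldr_cons]
    rw [h b List.mem_cons_self, ih (fun c hc => h c (List.mem_cons_of_mem b hc))]

namespace RotorSystem

variable {V E : Type} [Fintype V] [DecidableEq V] [Fintype E] [DecidableEq E]
variable (S : RotorSystem V E)

section Step

lemma step_of_mem (p : V × S.RConf) (h : p.1 ∈ S.T) : S.step p = p := by
  simp [step, h]

lemma step_fst (v : S.V0) (ρ : S.RConf) : (S.step (v.1, ρ)).1 = S.head (S.next (ρ.1 v)) := by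
  simp [step, v.2]

lemma step_snd_apply (p : V × S.RConf) (w : S.V0) :
    (S.step p).2.1 w = if p.1 = w.1 then S.next (p.2.1 w) else p.2.1 w := by
  by_cases hp : p.1 ∈ S.T
  · have hw : p.1 ≠ w.1 := fun h => w.2 (h ▸ hp)
    simp [step_of_mem S p hp, hw]
  · by_cases hw : p.1 = w.1
    · have : w = ⟨p.1, hp⟩ := Subtype.ext hw.symm
      subst this
      simp [step, hp]
    · have : w ≠ ⟨p.1, hp⟩ := fun h => hw (congrArg Subtype.val h).symm
      simp [step, hp, hw, Function.update_of_ne this]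

lemma iterate_step_snd_apply (p : V × S.RConf) (v : S.V0) (n : ℕ) :
    (S.step^[n] p).2.1 v =
      S.next^[Nat.count (fun i => (S.step^[i] p).1 = v.1) n] (p.2.1 v) := by
  induction n with
  | zero => rfl
  | succ n ih =>
    rw [Function.iterate_succ_apply', step_snd_apply, Nat.count_succ, ih]
    split_ifs <;> simp [Function.iterate_succ_apply']

/-- The `k`-th visit to `v` leaves along the arc `next^[k+1] (ρ v)`; by cyclicity every arc at
`v` is of that form. -/
lemma exists_iterate_step_fst_eq_head (p : V × S.RConf) (v : S.V0)
    (hv : ∃ᶠ n in Filter.atTop, (S.step^[n] p).1 = v.1) (e : E) (he : S.src e = v.1) :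
    ∃ n, (S.step^[n] p).1 = S.head e := by
  obtain ⟨k, hk⟩ := S.next_cyclic (S.next (p.2.1 v)) e (by rw [S.next_src, p.2.2 v, he])
  have hinf := Nat.frequently_atTop_iff_infinite.mp hv
  set t := Nat.nth (fun i => (S.step^[i] p).1 = v.1) k
  have hvisit : (S.step^[t] p).1 = v.1 := Nat.nth_mem_of_infinite hinf k
  refine ⟨t + 1, ?_⟩
  rw [Function.iterate_succ_apply', ← Prod.mk.eta (p := S.step^[t] p), hvisit, step_fst,
    iterate_step_snd_apply, Nat.count_nth_of_infinite hinf, ← hk,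
    ← Function.iterate_succ_apply, Function.iterate_succ_apply']

lemma frequently_iterate_step_fst_eq_head (p : V × S.RConf) (v : S.V0)
    (hv : ∃ᶠ n in Filter.atTop, (S.step^[n] p).1 = v.1) (e : E) (he : S.src e = v.1) :
    ∃ᶠ n in Filter.atTop, (S.step^[n] p).1 = S.head e := by
  rw [Filter.frequently_atTop] at hv ⊢
  intro N
  have hv' : ∃ᶠ n in Filter.atTop, (S.step^[n] (S.step^[N] p)).1 = v.1 := by
    rw [Filter.frequently_atTop]
    intro M
    obtain ⟨n, hn, hvn⟩ := hv (M + N)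
    exact ⟨n - N, by omega, by rwa [← Function.iterate_add_apply, Nat.sub_add_cancel (by omega)]⟩
  obtain ⟨n, hn⟩ := S.exists_iterate_step_fst_eq_head _ v hv' e he
  exact ⟨n + N, by omega, by rwa [Function.iterate_add_apply]⟩

/-- Rotor walks terminate: a vertex visited infinitely often passes this on to all its
out-neighbours, so by strong connectivity the walk would visit `T`. -/
theorem exists_iterate_step_fst_mem (p : V × S.RConf) : ∃ n, (S.step^[n] p).1 ∈ S.T := by
  by_contra! hT
  obtain ⟨v, hv⟩ : ∃ v, ∃ᶠ n in Filter.atTop, (S.step^[n] p).1 = v :=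
    Filter.frequently_exists.mp (Filter.Frequently.of_forall fun n => ⟨_, rfl⟩)
  have hreach : ∀ w, Relation.ReflTransGen (fun a b => ∃ e, S.src e = a ∧ S.head e = b) v w →
      ∃ᶠ n in Filter.atTop, (S.step^[n] p).1 = w := by
    intro w hw
    induction hw with
    | refl => exact hv
    | tail _ hab ih =>
      obtain ⟨e, rfl, rfl⟩ := hab
      obtain ⟨n, hn⟩ := ih.exists
      exact S.frequently_iterate_step_fst_eq_head p ⟨S.src e, fun h => hT n (hn ▸ h)⟩ ih e rfl
  obtain ⟨t, ht⟩ := S.T_nonempty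
  obtain ⟨n, hn⟩ := (hreach t (S.strongly_connected v t)).exists
  exact hT n (hn ▸ ht)

end Step

section Route

open Classical in
lemma route_eq_iterate (x : V) (ρ : S.RConf) :
    S.route x ρ = S.step^[Nat.find (S.exists_iterate_step_fst_mem (x, ρ))] (x, ρ) :=
  dif_pos _

lemma route_fst_mem (x : V) (ρ : S.RConf) : (S.route x ρ).1 ∈ S.T := by
  classical
  rw [route_eq_iterate]
  exact Nat.find_spec (S.exists_iterate_step_fst_mem (x, ρ))

lemma route_of_mem {x : V} (ρ : S.RConf) (h : x ∈ S.T) : S.route x ρ = (x, ρ) := by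
  classical
  rw [route_eq_iterate, (Nat.find_eq_zero _).mpr h, Function.iterate_zero_apply]

lemma route_of_notMem {x : V} (ρ : S.RConf) (h : x ∉ S.T) :
    S.route x ρ = S.route (S.step (x, ρ)).1 (S.step (x, ρ)).2 := by
  classical
  rw [route_eq_iterate, route_eq_iterate,
    Nat.find_comp_succ _ (by simpa only [Function.iterate_succ_apply] using
      S.exists_iterate_step_fst_mem (S.step (x, ρ))) h]
  simp only [Function.iterate_succ_apply]

end Route

section Moves

/-- A state of several particles walking simultaneously is the multiset of their positions
together with the rotor configuration; a move lets one particle take a rotor-walk step. -/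
def moveAt (x : V) (s : Multiset V × S.RConf) : Multiset V × S.RConf :=
  ((S.step (x, s.2)).1 ::ₘ s.1.erase x, (S.step (x, s.2)).2)

def Moves (s t : Multiset V × S.RConf) : Prop := ∃ x ∈ s.1, x ∉ S.T ∧ t = S.moveAt x s

lemma moveAt_comm {x y : V} {s : Multiset V × S.RConf} (hxy : x ≠ y) (hx : x ∉ S.T)
    (hy : y ∉ S.T) (hxs : x ∈ s.1) (hys : y ∈ s.1) :
    S.moveAt x (S.moveAt y s) = S.moveAt y (S.moveAt x s) := by
  obtain ⟨m, ρ⟩ := s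
  have hxy' : (⟨x, hx⟩ : S.V0) ≠ ⟨y, hy⟩ := fun h => hxy (congrArg Subtype.val h)
  have hrot (a b : S.V0) (hab : a ≠ b) : (S.step (a.1, ρ)).2.1 b = ρ.1 b := by
    rw [step_snd_apply, if_neg (fun h => hab (Subtype.ext h))]
  have hfx := S.step_fst ⟨x, hx⟩ (S.step (y, ρ)).2
  have hfy := S.step_fst ⟨y, hy⟩ (S.step (x, ρ)).2
  simp only at hfx hfy
  simp only [moveAt, Prod.mk.injEq]
  refine ⟨?_, Subtype.ext ?_⟩
  · rw [hfx, hfy, hrot _ _ hxy'.symm, hrot _ _ hxy', ← step_fst S ⟨x, hx⟩, ← step_fst S ⟨y, hy⟩,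
      Multiset.erase_cons_tail_of_mem ((Multiset.mem_erase_of_ne hxy).mpr hxs),
      Multiset.erase_cons_tail_of_mem ((Multiset.mem_erase_of_ne hxy.symm).mpr hys),
      Multiset.cons_swap, Multiset.erase_comm]
  · simp only [step, hx, hy, dite_false]
    rw [Function.update_of_ne hxy', Function.update_of_ne hxy'.symm,
      Function.update_comm hxy'.symm]

lemma moves_diamond (s t₁ t₂ : Multiset V × S.RConf) (h₁ : S.Moves s t₁) (h₂ : S.Moves s t₂) :
    ∃ d, Relation.ReflGen S.Moves t₁ d ∧ Relation.ReflTransGen S.Moves t₂ d := by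
  obtain ⟨x, hxs, hx, rfl⟩ := h₁
  obtain ⟨y, hys, hy, rfl⟩ := h₂
  rcases eq_or_ne x y with rfl | hxy
  · exact ⟨_, .refl, .refl⟩
  refine ⟨S.moveAt y (S.moveAt x s), .single ⟨y, ?_, hy, rfl⟩, .single ⟨x, ?_, hx, ?_⟩⟩
  · exact Multiset.mem_cons_of_mem ((Multiset.mem_erase_of_ne hxy.symm).mpr hys)
  · exact Multiset.mem_cons_of_mem ((Multiset.mem_erase_of_ne hxy).mpr hxs)
  · exact (S.moveAt_comm hxy hx hy hxs hys).symm

def AllAbsorbed (s : Multiset V × S.RConf) : Prop := ∀ x ∈ s.1, x ∈ S.T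

lemma eq_of_reflTransGen_moves {s t : Multiset V × S.RConf} (hs : S.AllAbsorbed s)
    (h : Relation.ReflTransGen S.Moves s t) : s = t := by
  rcases h.cases_head with h | ⟨_, ⟨x, hxs, hx, _⟩, _⟩
  · exact h
  · exact absurd (hs x hxs) hx

lemma eq_of_reflTransGen_moves_of_allAbsorbed {s t₁ t₂ : Multiset V × S.RConf}
    (h₁ : Relation.ReflTransGen S.Moves s t₁) (h₂ : Relation.ReflTransGen S.Moves s t₂)
    (ht₁ : S.AllAbsorbed t₁) (ht₂ : S.AllAbsorbed t₂) : t₁ = t₂ := by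
  obtain ⟨d, hd₁, hd₂⟩ := Relation.church_rosser S.moves_diamond h₁ h₂
  rw [S.eq_of_reflTransGen_moves ht₁ hd₁, S.eq_of_reflTransGen_moves ht₂ hd₂]

lemma reflTransGen_moves_route (x : V) (ρ : S.RConf) (c : Multiset V) :
    Relation.ReflTransGen S.Moves (x ::ₘ c, ρ) ((S.route x ρ).1 ::ₘ c, (S.route x ρ).2) := by
  obtain ⟨n, hn⟩ := S.exists_iterate_step_fst_mem (x, ρ)
  induction n generalizing x ρ with
  | zero => rw [S.route_of_mem (x := x) ρ hn]
  | succ n ih =>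
    by_cases hx : x ∈ S.T
    · rw [S.route_of_mem ρ hx]
    · rw [S.route_of_notMem ρ hx]
      refine .head ⟨x, Multiset.mem_cons_self x c, hx, rfl⟩ ?_
      rw [moveAt, Multiset.erase_cons_head]
      exact ih _ _ (by rwa [Function.iterate_succ_apply] at hn)

lemma reflTransGen_moves_route_route (a b : V) (ρ : S.RConf) :
    Relation.ReflTransGen S.Moves (a ::ₘ b ::ₘ 0, ρ)
      ((S.route b (S.route a ρ).2).1 ::ₘ (S.route a ρ).1 ::ₘ 0, (S.route b (S.route a ρ).2).2) :=
  (S.reflTransGen_moves_route a ρ _).trans <| by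
    rw [Multiset.cons_swap]
    exact S.reflTransGen_moves_route b _ _

lemma allAbsorbed_route_route (a b : V) (ρ : S.RConf) :
    S.AllAbsorbed
      ((S.route b (S.route a ρ).2).1 ::ₘ (S.route a ρ).1 ::ₘ 0, (S.route b (S.route a ρ).2).2) := by
  simp [AllAbsorbed, route_fst_mem]

end Moves

lemma addAt_commute (v w : S.V0) : Function.Commute (S.addAt v) (S.addAt w) := by
  intro ρ
  have h := S.eq_of_reflTransGen_moves_of_allAbsorbed (S.reflTransGen_moves_route_route w.1 v.1 ρ)
    (Multiset.cons_swap v.1 w.1 0 ▸ S.reflTransGen_moves_route_route v.1 w.1 ρ)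
    (S.allAbsorbed_route_route _ _ _) (S.allAbsorbed_route_route _ _ _)
  exact (Prod.ext_iff.mp h).2

lemma act_commute (σ τ : S.PConf) : Function.Commute (S.act σ) (S.act τ) :=
  (Function.Commute.foldr_right _ fun v _ =>
    (Function.Commute.foldr_right _ fun u _ =>
      ((S.addAt_commute v u).iterate_right (σ u))).symm.iterate_right (τ v))

end RotorSystem

/-- **Lemma (equivalence is respected by the particle action).**
If `ρ ≡ ρ'`, then `τρ ≡ τρ'` for every particle configuration `τ`. -/
theorem requiv_act {V E : Type} [Fintype V] [DecidableEq V] [Fintype E]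
    [DecidableEq E] (S : RotorSystem V E)
    (ρ ρ' : S.RConf) (h : S.REquiv ρ ρ') (τ : S.PConf) :
    S.REquiv (S.act τ ρ) (S.act τ ρ') := by
  obtain ⟨σ, hσ⟩ := h
  refine ⟨σ, ?_⟩
  rw [S.act_commute σ τ ρ, hσ, S.act_commute σ τ ρ']
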